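/- arXiv:2212.12576 — 3 statements merged into one kernel-verified Lean document; each statement's English description precedes it below -/
import Mathlib

section
/- Let 𝔽 be a field, A₁,…,Aₙ nonempty finite subsets of 𝔽, and B = ∏ᵢ Aᵢ. Suppose P ∈ 𝔽[x₁,…,xₙ] is a polynomial of total degree d that does not vanish on all of B. Then the number of points of B at which P is nonzero is at least min ∏ᵢ qᵢ, where the minimum is over all integers qᵢ with 1 ≤ qᵢ ≤ |Aᵢ| and ∑ᵢ qᵢ ≥ ∑ᵢ |Aᵢ| - d. -/
/-!
Division by the polynomials `∏_{c ∈ Aᵢ} (xᵢ - c)`, which vanish on `B`, replaces `P` by a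
polynomial `r` that agrees with `P` on `B`, has degree `< |Aᵢ|` in each `xᵢ`, and has total degree
at most `d`; it suffices to count the nonzeros of `r`. For such `r`, induct on `n`: write
`r = ∑_{j ≤ t} Q_j(x') x₀^j` with `t = deg_{x₀} r < |A₀|` and `Q_t ≠ 0`. By induction `Q_t` is
nonzero at `∏ q'ᵢ` or more points `b` of the remaining grid, with
`∑ q'ᵢ + deg Q_t ≥ ∑_{i > 0} |Aᵢ|`; for each such `b`, `r(·, b)` has degree `t`, so it is nonzero
at no fewer than `|A₀| - t` points of `A₀`. Take `q₀ = |A₀| - t` and use `deg Q_t + t ≤ deg r`.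
-/

open Finset MvPolynomial MonomialOrder

theorem Polynomial.card_sub_natDegree_le_card_filter_eval_ne_zero {R : Type*} [CommRing R]
    [IsDomain R] [DecidableEq R] {u : Polynomial R} (hu : u ≠ 0) (S : Finset R) :
    #S - u.natDegree ≤ #{c ∈ S | u.eval c ≠ 0} := by
  have hroots : #{c ∈ S | u.eval c = 0} ≤ u.natDegree :=
    Polynomial.card_le_degree_of_subset_roots fun c hc ↦ by
      simp only [Finset.mem_val, mem_filter] at hc
      exact (Polynomial.mem_roots hu).2 hc.2
  have := card_filter_add_card_filter_not (s := S) (p := fun c ↦ u.eval c = 0)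
  simp only [← ne_eq] at this
  omega

theorem Finset.card_filter_piFinset_succ {α : Type*} {n : ℕ} (S : Fin (n + 1) → Finset α)
    (p : (Fin (n + 1) → α) → Prop) [DecidablePred p] :
    #{x ∈ Fintype.piFinset S | p x} =
      ∑ b ∈ Fintype.piFinset (Fin.tail S), #{c ∈ S 0 | p (Fin.cons c b)} := by
  have hS : Fintype.piFinset S =
      (S 0 ×ˢ Fintype.piFinset (Fin.tail S)).map (Fin.consEquiv fun _ ↦ α).toEmbedding := by
    simpa using filter_piFinset_eq_map_consEquiv S fun _ ↦ True
  rw [card_filter, hS, sum_map, sum_product_right]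
  simp only [card_filter]
  rfl

namespace MvPolynomial

variable {σ R : Type*} [CommRing R]

theorem degLex_degree_prod_X_sub_C [LinearOrder σ] [WellFoundedGT σ] [Nontrivial R] (i : σ)
    (S : Finset R) :
    degLex.degree (∏ c ∈ S, (X i - C c)) = Finsupp.single i #S := by
  rw [MonomialOrder.degree_prod_of_regular fun c _ ↦ by
    rw [(degLex.monic_X_sub_C i c).leadingCoeff_eq_one]; exact isRegular_one]
  simp [MonomialOrder.degree_X_sub_C]

theorem exists_degreeOf_lt_totalDegree_le_eval_eq [Finite σ] [Nontrivial R] (S : σ → Finset R)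
    (hS : ∀ i, (S i).Nonempty) (f : MvPolynomial σ R) :
    ∃ r : MvPolynomial σ R, (∀ i, r.degreeOf i < #(S i)) ∧ r.totalDegree ≤ f.totalDegree ∧
      ∀ x : σ → R, (∀ i, x i ∈ S i) → eval x r = eval x f := by
  let : LinearOrder σ := WellOrderingRel.isWellOrder.linearOrder
  have hmonic (i : σ) : degLex.Monic (∏ c ∈ S i, (X i - C c)) :=
    Monic.prod fun c _ ↦ degLex.monic_X_sub_C i c
  -- `degLex` refines the total degree, so the division does not raise it.
  obtain ⟨g, r, hf, hg, hr⟩ := degLex.div (b := fun i ↦ ∏ c ∈ S i, (X i - C c))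
    (fun i ↦ by simp only [(hmonic i).leadingCoeff_eq_one, isUnit_one]) f
  have hr_eq : r = f - Finsupp.linearCombination _ (fun i ↦ ∏ c ∈ S i, (X i - C c)) g := by
    rw [hf]; ring
  refine ⟨r, fun i ↦ ?_, ?_, fun x hx ↦ ?_⟩
  · rw [degreeOf_lt_iff (card_pos.2 (hS i))]
    intro c hc
    have := hr c hc i
    rw [degLex_degree_prod_X_sub_C, Finsupp.single_le_iff] at this
    exact not_le.1 this
  · rw [hr_eq]
    refine (totalDegree_sub _ _).trans (max_le le_rfl ?_)
    rw [Finsupp.linearCombination_apply, Finsupp.sum]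
    refine (totalDegree_finsetSum _ _).trans (Finset.sup_le fun i _ ↦ ?_)
    rw [smul_eq_mul, mul_comm]
    exact degLex_totalDegree_monotone (hg i)
  · rw [hr_eq, map_sub, sub_eq_self, Finsupp.linearCombination_apply, Finsupp.sum, map_sum]
    refine Finset.sum_eq_zero fun i _ ↦ ?_
    rw [smul_eq_mul, map_mul, map_prod, Finset.prod_eq_zero (hx i) (by simp), mul_zero]

theorem card_sub_degreeOf_le_card_filter_eval_cons_ne_zero [IsDomain R] [DecidableEq R]
    {n : ℕ} (P : MvPolynomial (Fin (n + 1)) R) (S : Finset R) {b : Fin n → R}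
    (hb : eval b ((finSuccEquiv R n P).coeff (P.degreeOf 0)) ≠ 0) :
    #S - P.degreeOf 0 ≤ #{c ∈ S | eval (Fin.cons c b) P ≠ 0} := by
  set u := (finSuccEquiv R n P).map (eval b)
  have hu : u ≠ 0 := fun h ↦ hb <| by
    simpa only [u, Polynomial.coeff_map, Polynomial.coeff_zero] using
      congrArg (·.coeff (P.degreeOf 0)) h
  have hdeg : u.natDegree ≤ P.degreeOf 0 :=
    (Polynomial.natDegree_map_le).trans (natDegree_finSuccEquiv P).le
  simp only [eval_eq_eval_mv_eval']
  exact (Nat.sub_le_sub_left hdeg _).trans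
    (Polynomial.card_sub_natDegree_le_card_filter_eval_ne_zero hu S)

theorem card_sub_degreeOf_mul_card_le_card_filter_eval_ne_zero [IsDomain R] [DecidableEq R]
    {n : ℕ} (P : MvPolynomial (Fin (n + 1)) R) (A : Fin (n + 1) → Finset R) :
    (#(A 0) - P.degreeOf 0) * #{b ∈ Fintype.piFinset (Fin.tail A) |
        eval b ((finSuccEquiv R n P).coeff (P.degreeOf 0)) ≠ 0} ≤
      #{x ∈ Fintype.piFinset A | eval x P ≠ 0} := by
  rw [card_filter_piFinset_succ A fun x ↦ eval x P ≠ 0, mul_comm, ← smul_eq_mul, ← sum_const]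
  calc _ ≤ ∑ b ∈ Fintype.piFinset (Fin.tail A) with
          eval b ((finSuccEquiv R n P).coeff (P.degreeOf 0)) ≠ 0,
          #{c ∈ A 0 | eval (Fin.cons c b) P ≠ 0} :=
        sum_le_sum fun b hb ↦
          card_sub_degreeOf_le_card_filter_eval_cons_ne_zero P (A 0) (mem_filter.1 hb).2
    _ ≤ _ := sum_le_sum_of_subset (filter_subset _ _)

theorem exists_prod_le_card_filter_eval_ne_zero [IsDomain R] [DecidableEq R] {n : ℕ}
    (A : Fin n → Finset R) (P : MvPolynomial (Fin n) R) (hP : P ≠ 0)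
    (hdeg : ∀ i, P.degreeOf i < #(A i)) :
    ∃ q : Fin n → ℕ, (∀ i, 1 ≤ q i ∧ q i ≤ #(A i)) ∧ ∑ i, #(A i) ≤ ∑ i, q i + P.totalDegree ∧
      ∏ i, q i ≤ #{x ∈ Fintype.piFinset A | eval x P ≠ 0} := by
  induction n with
  | zero =>
    obtain ⟨x, hx, hPx⟩ : ∃ x ∈ Fintype.piFinset A, eval x P ≠ 0 := by
      by_contra! h
      exact hP (eq_zero_of_eval_zero_at_prod_finset P A hdeg fun x hx ↦
        h x (Fintype.mem_piFinset.2 hx))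
    exact ⟨fun i ↦ i.elim0, fun i ↦ i.elim0, by simp,
      by simpa using card_pos.2 ⟨x, mem_filter.2 ⟨hx, hPx⟩⟩⟩
  | succ n ih =>
    set t := P.degreeOf 0
    set Q := (finSuccEquiv R n P).coeff t
    have hQ : Q ≠ 0 := by
      simpa only [Q, t, ← natDegree_finSuccEquiv, Polynomial.coeff_natDegree, ne_eq,
        Polynomial.leadingCoeff_eq_zero, EmbeddingLike.map_eq_zero_iff] using hP
    have hQdeg : ∀ i, Q.degreeOf i < #(A i.succ) := fun i ↦
      (degreeOf_coeff_finSuccEquiv P i t).trans_lt (hdeg i.succ)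
    have hQtot : Q.totalDegree + t ≤ P.totalDegree :=
      totalDegree_coeff_finSuccEquiv_add_le P t hQ
    have ht : t < #(A 0) := hdeg 0
    obtain ⟨q, hq, hsum, hprod⟩ := ih (Fin.tail A) Q hQ hQdeg
    refine ⟨Fin.cons (#(A 0) - t) q, Fin.cases ⟨by rw [Fin.cons_zero]; omega, by rw [Fin.cons_zero]; omega⟩ hq, ?_, ?_⟩
    · simp only [Fin.sum_univ_succ, Fin.cons_zero, Fin.cons_succ]
      simp only [Fin.tail] at hsum
      omega
    calc ∏ i, (Fin.cons (#(A 0) - t) q : Fin (n + 1) → ℕ) i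
        = (#(A 0) - t) * ∏ i, q i := by simp [Fin.prod_univ_succ]
      _ ≤ (#(A 0) - t) * #{b ∈ Fintype.piFinset (Fin.tail A) | eval b Q ≠ 0} := by gcongr
      _ ≤ #{x ∈ Fintype.piFinset A | eval x P ≠ 0} :=
        card_sub_degreeOf_mul_card_le_card_filter_eval_ne_zero P A

end MvPolynomial

theorem stmt_3 {F : Type*} [Field F] {n : ℕ} (A : Fin n → Finset F)
    (hA : ∀ i, (A i).Nonempty) (P : MvPolynomial (Fin n) F) (d : ℕ)
    (hd : P.totalDegree = d)
    (hnv : ∃ x : Fin n → F, (∀ i, x i ∈ A i) ∧ MvPolynomial.eval x P ≠ 0) :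
    sInf {m : ℕ | ∃ q : Fin n → ℕ,
        (∀ i, 1 ≤ q i ∧ q i ≤ (A i).card) ∧
        ((∑ i, ((A i).card : ℤ)) - d ≤ ∑ i, (q i : ℤ)) ∧
        m = ∏ i, q i} ≤
      ({x : Fin n → F | (∀ i, x i ∈ A i) ∧ MvPolynomial.eval x P ≠ 0}).ncard := by
  classical
  obtain ⟨r, hr_deg, hr_tot, hr_eval⟩ := exists_degreeOf_lt_totalDegree_le_eval_eq A hA P
  obtain ⟨x, hx, hPx⟩ := hnv
  have hr : r ≠ 0 := fun h ↦ hPx <| by rw [← hr_eval x hx, h, map_zero]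
  obtain ⟨q, hq, hsum, hprod⟩ := exists_prod_le_card_filter_eval_ne_zero A r hr hr_deg
  have hgrid : {x : Fin n → F | (∀ i, x i ∈ A i) ∧ eval x P ≠ 0} =
      ↑{x ∈ Fintype.piFinset A | eval x r ≠ 0} := by
    ext x
    simp +contextual [hr_eval]
  rw [hgrid, Set.ncard_coe_finset]
  refine (Nat.sInf_le ?_).trans hprod
  refine ⟨q, hq, ?_, rfl⟩
  rw [← Nat.cast_sum, ← Nat.cast_sum]
  omega
end

section
/- Let f ∈ 𝔽₃[x₁,…,xₙ] be a product of l linear polynomials, each of the form xᵢ ± xⱼ - a for some i < j and a ∈ 𝔽₃. If f does not vanish on all of 𝔽₃ⁿ and 2n ≥ l, then the number of points of 𝔽₃ⁿ at which f is nonzero is at least 3^(n - l/2). -/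
/-!
Over a finite field `K` with `q` elements, `a ^ q = a` lets one replace `f` by a polynomial with
the same values, all of whose exponents are `< q`, without raising the total degree. View such a
nonzero polynomial in `n + 1` variables as a polynomial in the first variable, with leading
coefficient `g` of degree `t < q`: wherever `g` does not vanish, at most `t` of the `q` values of
the first variable are roots. Inducting on `n`, this gives `q ^ ((q - 1) n) ≤ N ^ (q - 1) q ^ deg f`
for the number `N` of non-zeros, the step resting on `q ^ (q - 1) ≤ (q - t) ^ (q - 1) q ^ t`, a
weighted AM-GM inequality. A product of `l` linear forms has degree at most `l`, and `q = 3`.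
-/

open MvPolynomial Finset

/-- In a field with `q` elements, `a ^ e` depends only on `reduceExp q e < q`, since `a ^ q = a`. -/
def reduceExp (q e : ℕ) : ℕ := if e = 0 then 0 else (e - 1) % (q - 1) + 1

lemma reduceExp_le (q e : ℕ) : reduceExp q e ≤ e := by
  unfold reduceExp; split_ifs
  · omega
  · have := Nat.mod_le (e - 1) (q - 1); omega

lemma reduceExp_lt {q : ℕ} (hq : 1 < q) (e : ℕ) : reduceExp q e < q := by
  unfold reduceExp; split_ifs
  · omega
  · have := Nat.mod_lt (e - 1) (by omega : 0 < q - 1); omega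

lemma pow_reduceExp {K : Type*} [Field K] [Fintype K] (a : K) (e : ℕ) :
    a ^ reduceExp (Fintype.card K) e = a ^ e := by
  unfold reduceExp
  split_ifs with he
  · rw [he]
  obtain ⟨k, rfl⟩ := Nat.exists_eq_add_one_of_ne_zero he
  rcases eq_or_ne a 0 with rfl | ha
  · simp
  conv_rhs => rw [← Nat.mod_add_div k (Fintype.card K - 1)]
  simp [pow_succ, pow_add, pow_mul, FiniteField.pow_card_sub_one_eq_one a ha]

lemma pow_sub_one_le_pow_sub_one {s q : ℕ} (hs : 1 ≤ s) (hsq : s ≤ q) :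
    q ^ (s - 1) ≤ s ^ (q - 1) := by
  rcases eq_or_lt_of_le (hs.trans hsq) with rfl | hq
  · obtain rfl : s = 1 := by omega
    rfl
  set w : ℝ := ((s - 1 : ℕ) : ℝ) / ((q - 1 : ℕ) : ℝ)
  have hq₁ : (0 : ℝ) < ((q - 1 : ℕ) : ℝ) := by exact_mod_cast Nat.sub_pos_of_lt hq
  have hw₀ : 0 ≤ w := by positivity
  have hw₁ : w ≤ 1 := div_le_one_of_le₀ (by gcongr) hq₁.le
  -- weighted AM-GM between `1` and `q`, whose `w`-weighted mean is `s`
  have hamgm : (q : ℝ) ^ w ≤ s := by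
    have := Real.geom_mean_le_arith_mean2_weighted (sub_nonneg.mpr hw₁) hw₀ zero_le_one
      (Nat.cast_nonneg q) (sub_add_cancel 1 w)
    rw [Real.one_rpow, one_mul] at this
    refine this.trans (le_of_eq ?_)
    simp only [w]
    field_simp
    push_cast [Nat.cast_sub hs, Nat.cast_sub (hs.trans hsq)]
    ring
  have hpow : ((q : ℝ) ^ w) ^ (q - 1) = (q : ℝ) ^ (s - 1) := by
    rw [← Real.rpow_mul_natCast (Nat.cast_nonneg q), div_mul_cancel₀ _ hq₁.ne', Real.rpow_natCast]
  exact_mod_cast hpow ▸ pow_le_pow_left₀ (by positivity) hamgm (q - 1)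

lemma pow_sub_one_le_sub_pow_mul_pow {q t : ℕ} (ht : t < q) :
    q ^ (q - 1) ≤ (q - t) ^ (q - 1) * q ^ t := by
  calc q ^ (q - 1) = q ^ (q - t - 1) * q ^ t := by rw [← pow_add]; congr 1; omega
    _ ≤ (q - t) ^ (q - 1) * q ^ t :=
      Nat.mul_le_mul_right _ (pow_sub_one_le_pow_sub_one (by omega) (Nat.sub_le q t))

lemma card_filter_fin_cons {α : Type*} [Fintype α] {n : ℕ} (P : (Fin (n + 1) → α) → Prop)
    [DecidablePred P] : #{x | P x} = ∑ x' : Fin n → α, #{y | P (Fin.cons y x')} := by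
  simp only [card_filter]
  rw [← (Fin.consEquiv fun _ => α).sum_comp, Fintype.sum_prod_type, sum_comm]
  rfl

lemma Polynomial.card_sub_natDegree_le_card_eval_ne_zero {K : Type*} [Field K] [Fintype K]
    [DecidableEq K] {p : Polynomial K} (hp : p ≠ 0) :
    Fintype.card K - p.natDegree ≤ #{y | p.eval y ≠ 0} := by
  have hroots : #{y | p.eval y = 0} ≤ p.natDegree :=
    (Polynomial.card_le_degree_of_subset_roots fun y hy => by
      simpa [Polynomial.mem_roots hp] using hy).trans (Polynomial.natDegree_le_natDegree le_rfl)
  have := card_filter_add_card_filter_not (s := univ) fun y => p.eval y = 0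
  simp only [← ne_eq, card_univ] at this
  omega

namespace MvPolynomial

variable {K σ : Type*} [Field K] [Fintype K]

noncomputable def reduce (f : MvPolynomial σ K) : MvPolynomial σ K :=
  ∑ m ∈ f.support,
    monomial (m.mapRange (reduceExp (Fintype.card K)) (by simp [reduceExp])) (coeff m f)

lemma eval_reduce (f : MvPolynomial σ K) (x : σ → K) : eval x (reduce f) = eval x f := by
  conv_rhs => rw [← support_sum_monomial_coeff f]
  simp only [reduce, map_sum, eval_monomial]
  refine sum_congr rfl fun m _ => congrArg _ ?_
  rw [Finsupp.prod_mapRange_index (by simp)]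
  exact Finsupp.prod_congr fun i _ => pow_reduceExp (x i) (m i)

lemma degreeOf_reduce_lt (f : MvPolynomial σ K) (v : σ) :
    degreeOf v (reduce f) < Fintype.card K := by
  classical
  rw [← Nat.le_sub_one_iff_lt Fintype.card_pos, degreeOf_le_iff]
  intro m hm
  obtain ⟨m₀, -, hm₀⟩ := mem_biUnion.mp (MvPolynomial.support_sum hm)
  rw [mem_singleton.mp (support_monomial_subset hm₀), Finsupp.mapRange_apply]
  exact Nat.le_sub_one_of_lt (reduceExp_lt Fintype.one_lt_card _)

lemma totalDegree_reduce_le (f : MvPolynomial σ K) :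
    totalDegree (reduce f) ≤ totalDegree f := by
  refine (totalDegree_finsetSum _ _).trans (Finset.sup_le fun m hm => ?_)
  refine (totalDegree_monomial_le _ _).trans ?_
  rw [Finsupp.sum_mapRange_index (by simp)]
  exact (Finset.sum_le_sum fun i _ => reduceExp_le _ _).trans (le_totalDegree hm)

variable [DecidableEq K]

lemma card_sub_natDegree_mul_card_le (n : ℕ) (f : MvPolynomial (Fin (n + 1)) K) :
    (Fintype.card K - (finSuccEquiv K n f).natDegree) *
        #{x' | eval x' (finSuccEquiv K n f).leadingCoeff ≠ 0} ≤ #{x | eval x f ≠ 0} := by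
  set F := finSuccEquiv K n f
  have hfiber : ∀ x' : Fin n → K, eval x' F.leadingCoeff ≠ 0 →
      Fintype.card K - F.natDegree ≤ #{y | eval (Fin.cons y x') f ≠ 0} := by
    intro x' hx'
    have hcoeff : (F.map (eval x')).coeff F.natDegree ≠ 0 := by
      rwa [Polynomial.coeff_map]
    simp only [eval_eq_eval_mv_eval']
    exact (Nat.sub_le_sub_left Polynomial.natDegree_map_le _).trans
      (Polynomial.card_sub_natDegree_le_card_eval_ne_zero (fun h => hcoeff (by simp [h])))
  calc (Fintype.card K - F.natDegree) * #{x' | eval x' F.leadingCoeff ≠ 0}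
      = ∑ x' with eval x' F.leadingCoeff ≠ 0, (Fintype.card K - F.natDegree) := by
        rw [sum_const, smul_eq_mul, mul_comm]
    _ ≤ ∑ x' with eval x' F.leadingCoeff ≠ 0, #{y | eval (Fin.cons y x') f ≠ 0} :=
        sum_le_sum fun x' hx' => hfiber x' (mem_filter.mp hx').2
    _ ≤ ∑ x' : Fin n → K, #{y | eval (Fin.cons y x') f ≠ 0} :=
        sum_le_sum_of_subset (filter_subset _ _)
    _ = #{x | eval x f ≠ 0} := (card_filter_fin_cons fun x => eval x f ≠ 0).symm

theorem pow_le_card_eval_ne_zero_pow_mul_pow_totalDegree {n : ℕ} (f : MvPolynomial (Fin n) K)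
    (hf : f ≠ 0) (hdeg : ∀ v, degreeOf v f < Fintype.card K) :
    Fintype.card K ^ ((Fintype.card K - 1) * n) ≤
      #{x | eval x f ≠ 0} ^ (Fintype.card K - 1) * Fintype.card K ^ f.totalDegree := by
  set q := Fintype.card K
  induction n with
  | zero =>
    obtain ⟨c, rfl⟩ := C_surjective (Fin 0) f
    have hc : c ≠ 0 := by rintro rfl; exact hf (map_zero C)
    simp [hc]
  | succ n ih =>
    set F := finSuccEquiv K n f
    have hF : F ≠ 0 := AddEquivClass.map_ne_zero_iff.mpr hf
    have hg : F.leadingCoeff ≠ 0 := Polynomial.leadingCoeff_ne_zero.mpr hF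
    have ht : F.natDegree < q := natDegree_finSuccEquiv f ▸ hdeg 0
    have hgdeg : F.leadingCoeff.totalDegree + F.natDegree ≤ f.totalDegree :=
      totalDegree_coeff_finSuccEquiv_add_le f _ hg
    have IH := ih F.leadingCoeff hg fun v => (degreeOf_coeff_finSuccEquiv f v _).trans_lt (hdeg _)
    calc q ^ ((q - 1) * (n + 1)) = q ^ (q - 1) * q ^ ((q - 1) * n) := by ring
      _ ≤ (q - F.natDegree) ^ (q - 1) * q ^ F.natDegree *
            (#{x' | eval x' F.leadingCoeff ≠ 0} ^ (q - 1) * q ^ F.leadingCoeff.totalDegree) :=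
          Nat.mul_le_mul (pow_sub_one_le_sub_pow_mul_pow ht) IH
      _ = ((q - F.natDegree) * #{x' | eval x' F.leadingCoeff ≠ 0}) ^ (q - 1) *
            q ^ (F.leadingCoeff.totalDegree + F.natDegree) := by ring
      _ ≤ #{x | eval x f ≠ 0} ^ (q - 1) * q ^ f.totalDegree := by
          gcongr
          · exact card_sub_natDegree_mul_card_le n f
          · exact Fintype.card_pos

theorem card_pow_sub_div_le_card_eval_ne_zero {n d : ℕ} (f : MvPolynomial (Fin n) K)
    (hf : ∃ x, eval x f ≠ 0) (hd : f.totalDegree ≤ d) :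
    (Fintype.card K : ℝ) ^ ((n : ℝ) - d / (Fintype.card K - 1)) ≤ #{x | eval x f ≠ 0} := by
  set q := Fintype.card K
  set N := #{x | eval x f ≠ 0}
  obtain ⟨x₀, hx₀⟩ := hf
  have hq : 1 < q := Fintype.one_lt_card
  have hreduce : reduce f ≠ 0 := fun h => hx₀ (by rw [← eval_reduce, h, map_zero])
  have hbound : q ^ ((q - 1) * n) ≤ N ^ (q - 1) * q ^ d := by
    have := pow_le_card_eval_ne_zero_pow_mul_pow_totalDegree _ hreduce (degreeOf_reduce_lt f)
    simp only [eval_reduce] at this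
    exact this.trans <| Nat.mul_le_mul_left _ <|
      Nat.pow_le_pow_right (by omega) ((totalDegree_reduce_le f).trans hd)
  have hexp : ((n : ℝ) - d / (q - 1)) * ((q - 1 : ℕ) : ℝ) = ((q - 1) * n : ℕ) - d := by
    have : (q : ℝ) - 1 ≠ 0 := sub_ne_zero.mpr (by exact_mod_cast hq.ne')
    push_cast [Nat.cast_sub hq.le]
    field_simp
  refine le_of_pow_le_pow_left₀ (n := q - 1) (by omega) (Nat.cast_nonneg N) ?_
  rw [← Real.rpow_natCast, ← Real.rpow_mul (Nat.cast_nonneg q), hexp, Real.rpow_sub (by positivity),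
    Real.rpow_natCast, Real.rpow_natCast, div_le_iff₀ (by positivity)]
  exact_mod_cast hbound

end MvPolynomial

lemma MvPolynomial.totalDegree_X_add_C_mul_X_sub_C_le {R σ : Type*} [CommRing R] (i j : σ)
    (c a : R) : (X i + C c * X j - C a).totalDegree ≤ 1 := by
  have hX (k : σ) : (X k : MvPolynomial σ R).totalDegree ≤ 1 :=
    (totalDegree_monomial_le _ _).trans (by simp)
  refine (totalDegree_sub_C_le _ _).trans ((totalDegree_add _ _).trans (max_le (hX i) ?_))
  exact (totalDegree_mul _ _).trans (by simpa [totalDegree_C] using hX j)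

theorem stmt_4_general {n l : ℕ} (i j : Fin l → Fin n)
    (ε : Fin l → ZMod 3) (a : Fin l → ZMod 3)
    (f : MvPolynomial (Fin n) (ZMod 3))
    (hf : f = ∏ e : Fin l,
      (MvPolynomial.X (i e) + MvPolynomial.C (ε e) * MvPolynomial.X (j e)
        - MvPolynomial.C (a e)))
    (hnv : ∃ x : Fin n → ZMod 3, MvPolynomial.eval x f ≠ 0) :
    (3 : ℝ) ^ ((n : ℝ) - (l : ℝ) / 2) ≤
      ({x : Fin n → ZMod 3 | MvPolynomial.eval x f ≠ 0}).ncard := by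
  have hdeg : f.totalDegree ≤ l := hf ▸ (totalDegree_finsetProd _ _).trans (by
    simpa using sum_le_sum (s := univ) fun e _ =>
      totalDegree_X_add_C_mul_X_sub_C_le (i e) (j e) (ε e) (a e))
  have hcount := card_pow_sub_div_le_card_eval_ne_zero f hnv hdeg
  rw [ZMod.card] at hcount
  rw [Set.ncard_eq_toFinset_card', Set.toFinset_ofPred]
  convert hcount using 3 <;> norm_num

theorem stmt_4 {n l : ℕ} (i j : Fin l → Fin n) (hij : ∀ e, i e < j e)
    (ε : Fin l → ZMod 3) (hε : ∀ e, ε e = 1 ∨ ε e = -1) (a : Fin l → ZMod 3)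
    (f : MvPolynomial (Fin n) (ZMod 3))
    (hf : f = ∏ e : Fin l,
      (MvPolynomial.X (i e) + MvPolynomial.C (ε e) * MvPolynomial.X (j e)
        - MvPolynomial.C (a e)))
    (hnv : ∃ x : Fin n → ZMod 3, MvPolynomial.eval x f ≠ 0)
    (hnl : 2 * n ≥ l) :
    (3 : ℝ) ^ ((n : ℝ) - (l : ℝ) / 2) ≤
      ({x : Fin n → ZMod 3 | MvPolynomial.eval x f ≠ 0}).ncard :=
  stmt_4_general i j ε a f hf hnv
end

section
/- For each k ≥ 1, the graph H_k obtained from K₁ ∨ P_{2k+2} by adding a new vertex z adjacent to both endpoints of the path is uniquely 3-colorable: there is exactly one partition of its vertex set into 3 independent sets. -/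
/-- The graph `H_k` on vertex set `Fin (2k+2) ⊕ Bool`: the path `0 - 1 - ⋯ - (2k+1)`
on the `inl` vertices, the join vertex `w = inr false` adjacent to every path vertex,
and the vertex `z = inr true` adjacent to the two endpoints of the path. -/
def Hk (k : ℕ) : SimpleGraph (Fin (2 * k + 2) ⊕ Bool) :=
  SimpleGraph.fromRel fun u v =>
    match u, v with
    | .inl i, .inl j => (i : ℕ) + 1 = (j : ℕ)
    | .inl i, .inr b => if b then ((i : ℕ) = 0 ∨ (i : ℕ) = 2 * k + 1) else True
    | .inr _, .inl _ => False
    | .inr _, .inr _ => False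

/-- `P` is a partition of the vertex set of `G` into `k` independent sets. -/
def IsIndepPartition {V : Type*} (G : SimpleGraph V) (k : ℕ) (P : Set (Set V)) : Prop :=
  (∀ s ∈ P, s.Nonempty) ∧
  (∀ s ∈ P, ∀ v ∈ s, ∀ w ∈ s, ¬ G.Adj v w) ∧
  ⋃₀ P = Set.univ ∧
  P.Pairwise Disjoint ∧
  P.ncard = k

/-!
Write `w = inr false` for the apex and `z = inr true` for the extra vertex. In a colouring with
at most three colours every triangle `{i, i + 1, w}` uses all three colours, so the path vertex
`i + 2`, adjacent to `i + 1` and `w`, repeats the colour of `i`: the path alternates two colours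
and `w` has the third. As the path has an even number of vertices, its endpoints get the two
path colours, which forces `z` into the colour class of `w`. Hence every colouring with at most
three colours has the colour classes of the parity colouring, and a partition into three
independent sets is the set of colour classes of the colouring by parts.
-/

open SimpleGraph Function

universe u

section Partitions

variable {V : Type u} {G : SimpleGraph V}

theorem isIndepPartition_iff {n : ℕ} {P : Set (Set V)} :
    IsIndepPartition G n P ↔
      Setoid.IsPartition P ∧ (∀ s ∈ P, G.IsIndepSet s) ∧ P.ncard = n := by
  constructor
  · rintro ⟨hne, hind, hcov, hdisj, hcard⟩
    refine ⟨Set.PairwiseDisjoint.isPartition_of_exists_of_ne_empty hdisj (fun v => ?_)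
      (fun h => ?_), fun s hs v hv w hw _ => hind s hs v hv w hw, hcard⟩
    · exact Set.mem_sUnion.mp (hcov ▸ Set.mem_univ v)
    · exact Set.not_nonempty_empty (hne ∅ h)
  · rintro ⟨hP, hind, hcard⟩
    refine ⟨fun s hs => Setoid.nonempty_of_mem_partition hP hs,
      fun s hs v hv w hw hvw => ?_, hP.sUnion_eq_univ, hP.pairwiseDisjoint, hcard⟩
    exact hind s hs hv hw (G.ne_of_adj hvw) hvw

theorem SimpleGraph.Partition.colorClasses_toColoring (P : G.Partition) :
    P.toColoring.colorClasses = P.parts := by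
  have hclass : ∀ y, {x | P.toColoring x = P.toColoring y} = P.partOfVertex y := by
    intro y
    ext x
    simp only [Partition.toColoring, Coloring.mk, RelHom.coeFn_mk, Set.mem_ofPred_eq,
      Subtype.mk.injEq]
    exact ⟨fun h => h ▸ P.mem_partOfVertex x, fun hx => Setoid.eq_of_mem_eqv_class
      P.isPartition.2 (P.partOfVertex_mem x) (P.mem_partOfVertex x) (P.partOfVertex_mem y) hx⟩
  ext s
  constructor
  · rintro ⟨y, rfl⟩
    exact (hclass y).symm ▸ P.partOfVertex_mem y
  · intro hs
    obtain ⟨y, hy⟩ := Setoid.nonempty_of_mem_partition P.isPartition hs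
    exact ⟨y, (hclass y).symm ▸ Setoid.eq_of_mem_eqv_class P.isPartition.2 hs hy
      (P.partOfVertex_mem y) (P.mem_partOfVertex y)⟩

variable {α β : Type*}

theorem SimpleGraph.Coloring.colorClasses_congr {C : G.Coloring α} {C' : G.Coloring β}
    (h : ∀ v w, C v = C w ↔ C' v = C' w) : C.colorClasses = C'.colorClasses := by
  rw [Coloring.colorClasses, Coloring.colorClasses, show Setoid.ker C = Setoid.ker C' from
    Setoid.ext h]

theorem SimpleGraph.Coloring.ncard_colorClasses {C : G.Coloring α} (hC : Surjective C) :
    C.colorClasses.ncard = Nat.card α := by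
  rw [← Nat.card_coe_set_eq]
  exact Nat.card_congr
    ((Setoid.quotientEquivClasses _).symm.trans (Setoid.quotientKerEquivOfSurjective _ hC))

theorem SimpleGraph.Coloring.isIndepPartition_colorClasses {C : G.Coloring α}
    (hC : Surjective C) : IsIndepPartition G (Nat.card α) C.colorClasses :=
  isIndepPartition_iff.mpr ⟨C.colorClasses_isPartition,
    fun _ ⟨y, hs⟩ => hs ▸ C.isIndepSet_colorClass (C y), Coloring.ncard_colorClasses hC⟩

theorem SimpleGraph.Coloring.existsUnique_isIndepPartition (C₀ : G.Coloring α)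
    (hC₀ : Surjective C₀)
    (huniq : ∀ (β : Type u) (C : G.Coloring β), Nat.card β = Nat.card α →
      ∀ v w, C v = C w ↔ C₀ v = C₀ w) :
    ∃! P, IsIndepPartition G (Nat.card α) P := by
  refine ⟨C₀.colorClasses, C₀.isIndepPartition_colorClasses hC₀, fun P hP => ?_⟩
  obtain ⟨hpart, hind, hcard⟩ := isIndepPartition_iff.mp hP
  let Q : G.Partition := ⟨P, hpart, hind⟩
  calc P = Q.toColoring.colorClasses := Q.colorClasses_toColoring.symm
    _ = C₀.colorClasses := Coloring.colorClasses_congr (huniq _ Q.toColoring hcard)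

end Partitions

theorem eq_of_ne_of_ne_of_card_le_three {α : Type*} [Finite α] (hα : Nat.card α ≤ 3)
    {a b c d : α} (hab : a ≠ b) (hac : a ≠ c) (hbc : b ≠ c) (hdb : d ≠ b) (hdc : d ≠ c) :
    d = a := by
  by_contra hda
  have hinj : Injective ![a, b, c, d] := by
    intro i j h
    fin_cases i <;> fin_cases j <;> simp_all [eq_comm]
  have := Nat.card_le_card_of_injective _ hinj
  simp at this
  omega

section Hk

def hkColoring (k : ℕ) : (Hk k).Coloring (Fin 3) :=
  Coloring.mk (Sum.elim (fun i => ⟨i % 2, by omega⟩) fun _ => 2) <| by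
    rintro (i | a) (j | b) h
    · simp only [Hk, fromRel_adj] at h
      simp [Fin.ext_iff]
      omega
    · simp [Fin.ext_iff]
      omega
    · simp [Fin.ext_iff]
      omega
    · simp [Hk] at h

variable {k : ℕ}

theorem hk_adj_succ {i : ℕ} (hi : i + 1 < 2 * k + 2) :
    (Hk k).Adj (.inl ⟨i, by omega⟩) (.inl ⟨i + 1, hi⟩) := by
  simp [Hk]

theorem hk_adj_inr_false (i : Fin (2 * k + 2)) : (Hk k).Adj (.inl i) (.inr false) := by
  simp [Hk]

theorem hk_adj_inr_true {i : Fin (2 * k + 2)} (hi : (i : ℕ) = 0 ∨ (i : ℕ) = 2 * k + 1) :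
    (Hk k).Adj (.inl i) (.inr true) := by
  simp only [Hk, fromRel_adj, ne_eq, reduceCtorEq, not_false_eq_true, true_and]
  exact Or.inl (by simpa using hi)

theorem hkColoring_surjective (k : ℕ) : Surjective (hkColoring k) := by
  intro c
  fin_cases c
  exacts [⟨.inl ⟨0, by omega⟩, rfl⟩, ⟨.inl ⟨1, by omega⟩, rfl⟩,
    ⟨.inr false, rfl⟩]

variable {β : Type*} [Finite β] (C : (Hk k).Coloring β) (hβ : Nat.card β ≤ 3)
include hβ

theorem hk_color_inl_eq_mod_two (i : ℕ) (hi : i < 2 * k + 2) :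
    C (.inl ⟨i, hi⟩) = C (.inl ⟨i % 2, by omega⟩) := by
  induction i using Nat.strong_induction_on with
  | _ i ih =>
    obtain hi2 | hi2 := lt_or_ge i 2
    · simp only [Nat.mod_eq_of_lt hi2]
    · obtain ⟨n, rfl⟩ : ∃ n, i = n + 2 := ⟨i - 2, by omega⟩
      have hn : C (.inl ⟨n + 2, hi⟩) = C (.inl ⟨n, by omega⟩) :=
        eq_of_ne_of_ne_of_card_le_three hβ
          (C.valid (hk_adj_succ (by omega)))
          (C.valid (hk_adj_inr_false _))
          (C.valid (hk_adj_inr_false _))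
          (C.valid (hk_adj_succ hi).symm)
          (C.valid (hk_adj_inr_false _))
      rw [hn, ih n (by omega)]
      simp

theorem hk_color_inr_true :
    C (.inr true) = C (.inr false) := by
  have hend : C (.inl ⟨2 * k + 1, by omega⟩) = C (.inl ⟨1, by omega⟩) := by
    rw [hk_color_inl_eq_mod_two C hβ]
    simp
  exact eq_of_ne_of_ne_of_card_le_three hβ
    (C.valid (hk_adj_inr_false _)).symm
    (C.valid (hk_adj_inr_false _)).symm
    (C.valid (hk_adj_succ (i := 0) (by omega)))
    (C.valid (hk_adj_inr_true (i := ⟨0, by omega⟩) (Or.inl rfl))).symm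
    (hend ▸ (C.valid (hk_adj_inr_true (i := ⟨2 * k + 1, by omega⟩) (Or.inr rfl))).symm)

theorem hk_color_eq_iff (v w : Fin (2 * k + 2) ⊕ Bool) :
    C v = C w ↔ hkColoring k v = hkColoring k w := by
  set g : Fin 3 → β := C ∘ ![.inl ⟨0, by omega⟩, .inl ⟨1, by omega⟩, .inr false]
    with hg_def
  have hg : Injective g := by
    refine C.injective_comp_of_pairwise_adj _ fun i j hij => ?_
    fin_cases i <;> fin_cases j
    all_goals first
      | exact absurd rfl hij
      | exact hk_adj_succ (i := 0) (by omega)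
      | exact (hk_adj_succ (i := 0) (by omega)).symm
      | exact hk_adj_inr_false _
      | exact (hk_adj_inr_false _).symm
  have hC_eq : ∀ v, C v = g (hkColoring k v) := by
    rintro (i | b)
    · rw [hk_color_inl_eq_mod_two C hβ]
      obtain h | h := Nat.mod_two_eq_zero_or_one i <;>
        simp [hg_def, hkColoring, Coloring.mk, h]
    · cases b
      · rfl
      · rw [hk_color_inr_true C hβ]; rfl
  rw [hC_eq v, hC_eq w, hg.eq_iff]

end Hk

theorem stmt_10_general (k : ℕ) :
    ∃! P : Set (Set (Fin (2 * k + 2) ⊕ Bool)), IsIndepPartition (Hk k) 3 P := by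
  have h := (hkColoring k).existsUnique_isIndepPartition (hkColoring_surjective k)
    fun β C hβ => ?_
  · simpa using h
  · have : Finite β := Nat.finite_of_card_ne_zero (by simp [hβ])
    exact hk_color_eq_iff C (by simp [hβ])

theorem stmt_10 (k : ℕ) (hk : 1 ≤ k) :
    ∃! P : Set (Set (Fin (2 * k + 2) ⊕ Bool)), IsIndepPartition (Hk k) 3 P :=
  stmt_10_general k
end
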